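/- Let ν > −1/2 with ν ≠ 0, let ε be real with 0 < ε < ν + 1/2, and let n ≥ 0 be an integer. Then ∫_{−1}^{1} P^{(ν)}_n(x)·(1−x²)^{ν−1/2}·(1−x)^{−ε} dx = P^{(ν)}_n(1) · 2^{2ν−ε}·Γ(ν+1/2)·Γ(ν−ε+1/2)·Γ(n+ε) / (Γ(ε)·Γ(n+2ν−ε+1)), where Γ is the Gamma function and the left-hand side is a Lebesgue integral over [−1,1]. -/

import Mathlib

/-!
With `p = ν - 1/2 - ε` and `q = ν - 1/2` the weight is the Jacobi weight
`w_{p,q}(x) = (1 - x)^p (1 + x)^q`, and `x · w_{p,q} = w_{p,q} - w_{p+1,q}`. Hence the three-term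
recurrence gives, for `I_n(ε) = ∫ P_n w_{p,q}`,
`I_{n+2}(ε) = I_{n+1}(ε) - I_{n+1}(ε - 1) - β_{n+1} I_n(ε)`, and a two-step induction on `n`,
for all `ε` at once, yields `I_n(ε) = P_n(1) (ε)_n / (2ν - ε + 1)_n · I_0(ε)`. The integral
`I_0(ε)` is a Beta integral, and the Pochhammer symbols are the Gamma quotients of the statement.
-/

open Polynomial Filter MeasureTheory

noncomputable section

/-- Recurrence coefficients `β_k = k(k+2ν−1)/(4(k+ν)(k+ν−1))` of the monic
ultraspherical polynomials. -/
def ultraBeta (ν : ℝ) (k : ℕ) : ℝ :=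
  k * (k + 2 * ν - 1) / (4 * (k + ν) * (k + ν - 1))

/-- Monic ultraspherical polynomials `P^{(ν)}_0 = 1`, `P^{(ν)}_1 = X`,
`P^{(ν)}_{k+1} = X·P^{(ν)}_k − β_k·P^{(ν)}_{k−1}`. -/
def ultraP (ν : ℝ) : ℕ → Polynomial ℝ
  | 0 => 1
  | 1 => X
  | (k + 2) => X * ultraP ν (k + 1) - C (ultraBeta ν (k + 1)) * ultraP ν k

/-- First-order numerator polynomials `Q^{(ν)}_0 = 1`, `Q^{(ν)}_1 = X`,
`Q^{(ν)}_{k+1} = X·Q^{(ν)}_k − β_{k+1}·Q^{(ν)}_{k−1}`. -/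
def ultraQ (ν : ℝ) : ℕ → Polynomial ℝ
  | 0 => 1
  | 1 => X
  | (k + 2) => X * ultraQ ν (k + 1) - C (ultraBeta ν (k + 2)) * ultraQ ν k

/-- Co-dilated ultraspherical polynomials: same recurrence as `ultraP ν`, except that
the single coefficient `β_1` is replaced by `λ·β_1`. -/
def ultraPstar (ν lam : ℝ) : ℕ → Polynomial ℝ
  | 0 => 1
  | 1 => X
  | (k + 2) => X * ultraPstar ν lam (k + 1) -
      C (if k + 1 = 1 then lam * ultraBeta ν 1 else ultraBeta ν (k + 1)) * ultraPstar ν lam k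

theorem Real.integral_rpow_mul_one_sub_rpow {a b : ℝ} (ha : 0 < a) (hb : 0 < b) :
    ∫ x in (0 : ℝ)..1, x ^ (a - 1) * (1 - x) ^ (b - 1) =
      Real.Gamma a * Real.Gamma b / Real.Gamma (a + b) := by
  have hbeta := Complex.Gamma_mul_Gamma_eq_betaIntegral (s := a) (t := b)
    (by simpa using ha) (by simpa using hb)
  have hcast : Complex.betaIntegral a b =
      ((∫ x in (0 : ℝ)..1, x ^ (a - 1) * (1 - x) ^ (b - 1) : ℝ) : ℂ) := by
    rw [Complex.betaIntegral, ← intervalIntegral.integral_ofReal]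
    refine intervalIntegral.integral_congr fun x hx => ?_
    rw [Set.uIcc_of_le zero_le_one] at hx
    push_cast
    rw [Complex.ofReal_cpow hx.1, Complex.ofReal_cpow (sub_nonneg.2 hx.2)]
    push_cast
    ring
  rw [hcast, ← Complex.ofReal_add, Complex.Gamma_ofReal, Complex.Gamma_ofReal,
    Complex.Gamma_ofReal, ← Complex.ofReal_mul, ← Complex.ofReal_mul] at hbeta
  rw [eq_div_iff (Real.Gamma_pos_of_pos (add_pos ha hb)).ne', Complex.ofReal_injective hbeta,
    mul_comm]

theorem Real.Gamma_add_nat_eq_mul_ascPochhammer {x : ℝ} (hx : ∀ k : ℕ, x + k ≠ 0) (n : ℕ) :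
    Real.Gamma (x + n) = Real.Gamma x * (ascPochhammer ℝ n).eval x := by
  induction n with
  | zero => simp
  | succ n ih =>
    rw [Nat.cast_succ, ← add_assoc, Real.Gamma_add_one (hx n), ih, ascPochhammer_succ_eval]
    ring

def jacobiWeight (p q x : ℝ) : ℝ := (1 - x) ^ p * (1 + x) ^ q

section JacobiWeight

variable {p q : ℝ}

theorem intervalIntegrable_jacobiWeight (hp : -1 < p) (hq : -1 < q) :
    IntervalIntegrable (jacobiWeight p q) volume (-1) 1 := by
  have hright : IntervalIntegrable (jacobiWeight p q) volume 0 1 := by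
    have hsing : IntervalIntegrable (fun x : ℝ => (1 - x) ^ p) volume 0 1 := by
      simpa using
        ((intervalIntegral.intervalIntegrable_rpow' (a := 0) (b := 1) hp).comp_sub_left 1).symm
    refine hsing.mul_continuousOn (ContinuousOn.rpow_const (by fun_prop) fun x hx => Or.inl ?_)
    rw [Set.uIcc_of_le zero_le_one] at hx
    linarith [hx.1]
  have hleft : IntervalIntegrable (jacobiWeight p q) volume (-1) 0 := by
    have hsing : IntervalIntegrable (fun x : ℝ => (1 + x) ^ q) volume (-1) 0 := by
      simpa [add_comm] using
        (intervalIntegral.intervalIntegrable_rpow' (a := 0) (b := 1) hq).comp_sub_right (-1)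
    refine hsing.continuousOn_mul (ContinuousOn.rpow_const (by fun_prop) fun x hx => Or.inl ?_)
    rw [Set.uIcc_of_le (by norm_num)] at hx
    linarith [hx.2]
  exact hleft.trans hright

theorem intervalIntegrable_eval_mul_jacobiWeight (f : ℝ[X]) (hp : -1 < p) (hq : -1 < q) :
    IntervalIntegrable (fun x => f.eval x * jacobiWeight p q x) volume (-1) 1 :=
  (intervalIntegrable_jacobiWeight hp hq).continuousOn_mul f.continuous.continuousOn

theorem integral_jacobiWeight (hp : -1 < p) (hq : -1 < q) :
    ∫ x in (-1 : ℝ)..1, jacobiWeight p q x =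
      2 ^ (p + q + 1) * Real.Gamma (p + 1) * Real.Gamma (q + 1) / Real.Gamma (p + q + 2) := by
  have hsubst : ∫ x in (-1 : ℝ)..1, jacobiWeight p q x =
      2 * ∫ t in (0 : ℝ)..1, jacobiWeight p q (2 * t + -1) := by
    rw [intervalIntegral.integral_comp_mul_add _ two_ne_zero, smul_eq_mul,
      mul_inv_cancel_left₀ two_ne_zero]
    norm_num
  have hscale : ∫ t in (0 : ℝ)..1, jacobiWeight p q (2 * t + -1) =
      2 ^ p * 2 ^ q * ∫ t in (0 : ℝ)..1, t ^ (q + 1 - 1) * (1 - t) ^ (p + 1 - 1) := by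
    rw [← intervalIntegral.integral_const_mul]
    refine intervalIntegral.integral_congr fun t ht => ?_
    rw [Set.uIcc_of_le zero_le_one] at ht
    rw [jacobiWeight, show 1 - (2 * t + -1) = 2 * (1 - t) by ring,
      show 1 + (2 * t + -1) = 2 * t by ring, Real.mul_rpow zero_le_two (by linarith [ht.2]),
      Real.mul_rpow zero_le_two ht.1, add_sub_cancel_right, add_sub_cancel_right]
    ring
  rw [hsubst, hscale, Real.integral_rpow_mul_one_sub_rpow (by linarith) (by linarith),
    Real.rpow_add two_pos, Real.rpow_add two_pos, Real.rpow_one,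
    show q + 1 + (p + 1) = p + q + 2 by ring]
  ring

theorem integral_jacobiWeight_add_one_left (hp : -1 < p) (hq : -1 < q) :
    ∫ x in (-1 : ℝ)..1, jacobiWeight (p + 1) q x =
      2 * (p + 1) / (p + q + 2) * ∫ x in (-1 : ℝ)..1, jacobiWeight p q x := by
  have hp1 : p + 1 ≠ 0 := by linarith
  have hpq : p + q + 2 ≠ 0 := by linarith
  rw [integral_jacobiWeight (by linarith) hq, integral_jacobiWeight hp hq,
    show p + 1 + q + 1 = (p + q + 1) + 1 by ring, show p + 1 + q + 2 = (p + q + 2) + 1 by ring,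
    Real.rpow_add_one two_ne_zero, Real.Gamma_add_one hp1, Real.Gamma_add_one hpq]
  field_simp

theorem mul_jacobiWeight (hp : p + 1 ≠ 0) {x : ℝ} (hx : x ≤ 1) :
    x * jacobiWeight p q x = jacobiWeight p q x - jacobiWeight (p + 1) q x := by
  rw [jacobiWeight, jacobiWeight, Real.rpow_add_one' (sub_nonneg.2 hx) hp]
  ring

theorem integral_eval_X_mul_mul_jacobiWeight (f : ℝ[X]) (hp : -1 < p) (hq : -1 < q) :
    ∫ x in (-1 : ℝ)..1, (X * f).eval x * jacobiWeight p q x =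
      (∫ x in (-1 : ℝ)..1, f.eval x * jacobiWeight p q x) -
        ∫ x in (-1 : ℝ)..1, f.eval x * jacobiWeight (p + 1) q x := by
  rw [← intervalIntegral.integral_sub (intervalIntegrable_eval_mul_jacobiWeight f hp hq)
    (intervalIntegrable_eval_mul_jacobiWeight f (by linarith) hq)]
  refine intervalIntegral.integral_congr fun x hx => ?_
  rw [Set.uIcc_of_le (by norm_num)] at hx
  rw [eval_mul, eval_X, mul_comm x, mul_assoc, mul_jacobiWeight (by linarith) hx.2, mul_sub]

end JacobiWeight

theorem ascPochhammer_succ_eval_left {S : Type*} [CommSemiring S] (n : ℕ) (x : S) :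
    (ascPochhammer S (n + 1)).eval x = x * (ascPochhammer S n).eval (x + 1) := by
  rw [ascPochhammer_succ_left, eval_mul, eval_X, eval_comp, eval_add, eval_X, eval_one]

section Ultraspherical

variable {ν : ℝ}

theorem ultraBeta_succ (n : ℕ) :
    ultraBeta ν (n + 1) = (n + 1) * (2 * ν + n) / (4 * (ν + (n + 1)) * (ν + n)) := by
  simp only [ultraBeta]
  push_cast
  ring

theorem ultraP_eval_one_succ (hν : ∀ k : ℕ, ν + k ≠ 0) (n : ℕ) :
    (ultraP ν (n + 1)).eval 1 = (2 * ν + n) / (2 * (ν + n)) * (ultraP ν n).eval 1 := by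
  induction n with
  | zero =>
    have h2ν : 2 * ν ≠ 0 := by simpa using hν 0
    simp [ultraP, h2ν]
  | succ n ih =>
    have hn1 : ν + (n + 1) ≠ 0 := by exact_mod_cast hν (n + 1)
    rw [ultraP, eval_sub, eval_mul, eval_mul, eval_X, eval_C, one_mul, ih, ultraBeta_succ]
    push_cast
    field_simp
    ring

theorem integral_ultraP_add_two_mul_jacobiWeight {p q : ℝ} (hp : -1 < p) (hq : -1 < q) (n : ℕ) :
    ∫ x in (-1 : ℝ)..1, (ultraP ν (n + 2)).eval x * jacobiWeight p q x =
      (∫ x in (-1 : ℝ)..1, (ultraP ν (n + 1)).eval x * jacobiWeight p q x) -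
        (∫ x in (-1 : ℝ)..1, (ultraP ν (n + 1)).eval x * jacobiWeight (p + 1) q x) -
          ultraBeta ν (n + 1) * ∫ x in (-1 : ℝ)..1, (ultraP ν n).eval x * jacobiWeight p q x := by
  simp only [ultraP, eval_sub, sub_mul]
  rw [intervalIntegral.integral_sub (intervalIntegrable_eval_mul_jacobiWeight _ hp hq)
      (intervalIntegrable_eval_mul_jacobiWeight _ hp hq),
    integral_eval_X_mul_mul_jacobiWeight _ hp hq]
  simp only [eval_mul, eval_C, mul_assoc, intervalIntegral.integral_const_mul]

/-- Stated with Pochhammer symbols rather than Gamma quotients because the induction lowers `ε`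
below `0`, into the poles of `Real.Gamma`. -/
theorem integral_ultraP_mul_jacobiWeight (hν : -(1 / 2) < ν) (hν₀ : ν ≠ 0) (n : ℕ) {ε : ℝ}
    (hε : ε < ν + 1 / 2) :
    ∫ x in (-1 : ℝ)..1, (ultraP ν n).eval x * jacobiWeight (ν - 1 / 2 - ε) (ν - 1 / 2) x =
      (ultraP ν n).eval 1 *
        ((ascPochhammer ℝ n).eval ε / (ascPochhammer ℝ n).eval (2 * ν - ε + 1)) *
          ∫ x in (-1 : ℝ)..1, jacobiWeight (ν - 1 / 2 - ε) (ν - 1 / 2) x := by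
  have hν_nat : ∀ k : ℕ, ν + k ≠ 0 := fun k hk => by
    rcases k with _ | k
    · exact hν₀ (by simpa using hk)
    · push_cast at hk; linarith [(k.cast_nonneg : (0 : ℝ) ≤ k)]
  have hq : -1 < ν - 1 / 2 := by linarith
  have hshift : ∀ ε : ℝ, ε < ν + 1 / 2 →
      ∫ x in (-1 : ℝ)..1, jacobiWeight (ν - 1 / 2 - (ε - 1)) (ν - 1 / 2) x =
        (2 * ν + 1 - 2 * ε) / (2 * ν - ε + 1) *
          ∫ x in (-1 : ℝ)..1, jacobiWeight (ν - 1 / 2 - ε) (ν - 1 / 2) x := fun ε hε => by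
    rw [show ν - 1 / 2 - (ε - 1) = ν - 1 / 2 - ε + 1 by ring,
      integral_jacobiWeight_add_one_left (by linarith) hq]
    congr 1
    ring
  induction n using Nat.twoStepInduction generalizing ε with
  | zero => simp [ultraP]
  | one =>
    have hs : 2 * ν - ε + 1 ≠ 0 := by linarith
    rw [show ultraP ν 1 = X * ultraP ν 0 by simp [ultraP],
      integral_eval_X_mul_mul_jacobiWeight _ (by linarith) hq,
      show ν - 1 / 2 - ε + 1 = ν - 1 / 2 - (ε - 1) by ring]
    simp only [ultraP, eval_one, mul_one, one_mul, eval_X, ascPochhammer_one]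
    rw [hshift ε hε, ← one_sub_mul]
    congr 1
    field_simp
    ring
  | more n ih ih1 =>
    have hs : 0 < 2 * ν - ε + 1 := by linarith
    have hνn1 : ν + (n + 1) ≠ 0 := by exact_mod_cast hν_nat (n + 1)
    rw [integral_ultraP_add_two_mul_jacobiWeight (by linarith) hq,
      show ν - 1 / 2 - ε + 1 = ν - 1 / 2 - (ε - 1) by ring,
      ih1 hε, ih1 (by linarith), ih hε, hshift ε hε,
      ultraP_eval_one_succ hν_nat (n + 1), ultraP_eval_one_succ hν_nat n, ultraBeta_succ,
      ascPochhammer_succ_eval_left n (ε - 1), sub_add_cancel,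
      show 2 * ν - (ε - 1) + 1 = 2 * ν - ε + 1 + 1 by ring,
      ← mul_div_cancel_left₀ ((ascPochhammer ℝ (n + 1)).eval (2 * ν - ε + 1 + 1)) hs.ne',
      ← ascPochhammer_succ_eval_left]
    simp only [ascPochhammer_succ_eval]
    push_cast
    field_simp
    ring

end Ultraspherical

theorem ultraspherical_weighted_integral (ν : ℝ) (hν : -(1 / 2) < ν) (hν₀ : ν ≠ 0)
    (ε : ℝ) (hε₀ : 0 < ε) (hε₁ : ε < ν + 1 / 2) (n : ℕ) :
    ∫ x in Set.Icc (-1 : ℝ) 1,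
        (ultraP ν n).eval x * (1 - x ^ 2) ^ (ν - 1 / 2) * (1 - x) ^ (-ε) =
      (ultraP ν n).eval 1 *
        (2 ^ (2 * ν - ε) * Real.Gamma (ν + 1 / 2) * Real.Gamma (ν - ε + 1 / 2) *
          Real.Gamma (n + ε)) / (Real.Gamma ε * Real.Gamma (n + 2 * ν - ε + 1)) := by
  have hweight : ∀ x ∈ Set.Ioo (-1 : ℝ) 1,
      (ultraP ν n).eval x * (1 - x ^ 2) ^ (ν - 1 / 2) * (1 - x) ^ (-ε) =
        (ultraP ν n).eval x * jacobiWeight (ν - 1 / 2 - ε) (ν - 1 / 2) x := fun x hx => by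
    rw [jacobiWeight, show 1 - x ^ 2 = (1 - x) * (1 + x) by ring,
      Real.mul_rpow (by linarith [hx.2]) (by linarith [hx.1]), sub_eq_add_neg _ ε,
      Real.rpow_add (by linarith [hx.2])]
    ring
  have hs : 0 < 2 * ν - ε + 1 := by linarith
  have add_nat_ne_zero {x : ℝ} (hx : 0 < x) (k : ℕ) : x + k ≠ 0 := by positivity
  rw [integral_Icc_eq_integral_Ioo, setIntegral_congr_fun measurableSet_Ioo hweight,
    ← integral_Ioc_eq_integral_Ioo, ← intervalIntegral.integral_of_le (by norm_num),
    integral_ultraP_mul_jacobiWeight hν hν₀ n hε₁,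
    integral_jacobiWeight (by linarith) (by linarith),
    add_comm (n : ℝ), Real.Gamma_add_nat_eq_mul_ascPochhammer (add_nat_ne_zero hε₀),
    show (n : ℝ) + 2 * ν - ε + 1 = 2 * ν - ε + 1 + n by ring,
    Real.Gamma_add_nat_eq_mul_ascPochhammer (add_nat_ne_zero hs),
    show ν - 1 / 2 - ε + (ν - 1 / 2) + 1 = 2 * ν - ε by ring,
    show ν - 1 / 2 - ε + 1 = ν - ε + 1 / 2 by ring, show ν - 1 / 2 + 1 = ν + 1 / 2 by ring,
    show ν - 1 / 2 - ε + (ν - 1 / 2) + 2 = 2 * ν - ε + 1 by ring]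
  field_simp

end
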